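/- Factorized form of the $U(1)$ two-fermion matrix element: for positive half-integers $p,q$ and $\nu\ne0$, $\sum_{n=0}^{q-1/2}\frac{(-\nu)_n}{n!}\frac{(\nu)_{p+q-n}}{(p+q-n)!} = -\frac{1}{\nu(p+q)}\frac{(\nu)_{p+1/2}(-\nu)_{q+1/2}}{(p-1/2)!\,(q-1/2)!}$. -/

import Mathlib

open Finset

/-- Pochhammer symbol. -/
noncomputable def poch (x : ℂ) (m : ℕ) : ℂ := (ascPochhammer ℂ m).eval x

/-!
Write `S(a, b)` for the sum and induct on `b`, letting `a` vary. Splitting off the last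
summand gives `S(a, b + 1) = S(a + 1, b) + (-ν)_{b+1} (ν)_{a+1} / ((b + 1)! (a + 1)!)`,
and the closed form satisfies the same recurrence by a rational-function identity. Writing
`(-ν)_{b+1} = -ν (1 - ν)_b` cancels the prefactor `1/ν`, so the closed form
`(ν)_{a+1} (1 - ν)_b / ((a + b + 1) a! b!)` holds for every `ν`.
-/

open Nat

theorem ascPochhammer_succ_eval_neg {R : Type*} [CommRing R] (x : R) (n : ℕ) :
    (ascPochhammer R (n + 1)).eval (-x) = -x * (ascPochhammer R n).eval (1 - x) := by
  simp [ascPochhammer_succ_left, neg_add_eq_sub]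

theorem sum_ascPochhammer_neg_mul_ascPochhammer {K : Type*} [Field K] [CharZero K] (x : K)
    (a b : ℕ) :
    ∑ n ∈ range (b + 1),
        (ascPochhammer K n).eval (-x) / n ! *
          ((ascPochhammer K (a + b + 1 - n)).eval x / (a + b + 1 - n)!)
      = (ascPochhammer K (a + 1)).eval x * (ascPochhammer K b).eval (1 - x) /
          ((a + b + 1) * a ! * b !) := by
  induction b generalizing a with
  | zero => simp [Nat.factorial_succ]
  | succ b ih =>
    rw [sum_range_succ, show a + (b + 1) + 1 = a + 1 + b + 1 by omega, ih (a + 1),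
      show a + 1 + b + 1 - (b + 1) = a + 1 by omega, ascPochhammer_succ_eval_neg,
      ascPochhammer_succ_eval (a + 1) x, ascPochhammer_succ_eval b (1 - x),
      Nat.factorial_succ a, Nat.factorial_succ b]
    have hab : (a + 1 + b + 1 : K) ≠ 0 := by exact_mod_cast (a + 1 + b).succ_ne_zero
    push_cast
    rw [show (a + (b + 1) + 1 : K) = a + 1 + b + 1 by ring]
    field_simp
    ring

/-- Factorized form of the `U(1)` two-fermion matrix element: for positive half-integers
`p = a + 1/2`, `q = b + 1/2` (`a, b ∈ ℕ`) and `ν ≠ 0`,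
`∑_{n=0}^{q-1/2} (-ν)_n/n! ⋅ (ν)_{p+q-n}/(p+q-n)!
  = -(1/(ν(p+q))) (ν)_{p+1/2}(-ν)_{q+1/2} / ((p-1/2)!(q-1/2)!)`, i.e.
`∑_{n=0}^{b} (-ν)_n/n! ⋅ (ν)_{a+b+1-n}/(a+b+1-n)!
  = -(1/(ν(a+b+1))) (ν)_{a+1}(-ν)_{b+1}/(a! b!)`. -/
theorem u1_matrix_element_factorized (ν : ℂ) (hν : ν ≠ 0) (a b : ℕ) :
    ∑ n ∈ Finset.range (b + 1),
        poch (-ν) n / (Nat.factorial n : ℂ) *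
          (poch ν (a + b + 1 - n) / (Nat.factorial (a + b + 1 - n) : ℂ))
      = -(1 / (ν * ((a : ℂ) + b + 1))) *
          (poch ν (a + 1) * poch (-ν) (b + 1) /
            ((Nat.factorial a : ℂ) * (Nat.factorial b : ℂ))) := by
  simp only [poch]
  rw [ascPochhammer_succ_eval_neg, sum_ascPochhammer_neg_mul_ascPochhammer]
  field_simp
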